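/- For a finite set X, full-support μ₀ ∈ P(X), β > 0, and cost functions f_t: X → ℝ, define π₁ = μ₀ and recursively π_{t+1} = argmin over π ∈ P(X) of γ_t[β⟨π, f_t⟩ + D(π‖μ₀)] + D(π‖π_t) with γ_t = 1/t. Then for all t ≥ 0, π_{t+1}(x) = μ₀(x)exp(−β F_t(x))/Z̃_{t+1}, where F₀ = 0 and F_t = (1/(t+1))Σ_{s=1}^t f_s, and Z̃_{t+1} is a normalization constant. -/

import Mathlib

/-! Up to an additive constant, each mirror-descent objective
`γ (β⟨ν, f⟩ + D(ν‖μ₀)) + D(ν‖μ₀ e^{-βG}/Z₀)` equals `(1 + γ) D(ν‖q)`, where `q` is the Gibbs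
distribution `∝ μ₀ e^{-βH}` with `H = (G + γ f)/(1 + γ)`; by Gibbs' inequality `q` is the unique
minimizer. With `γ_t = 1/t`, these weighted averages of the costs are exactly the `F_t`. -/

open Finset Real
open InformationTheory (klFun klFun_apply klFun_nonneg klFun_eq_zero_iff)

noncomputable def klDiv {X : Type*} [Fintype X] (ν ρ : X → ℝ) : ℝ :=
  ∑ x, ν x * Real.log (ν x / ρ x)

def IsProb {X : Type*} [Fintype X] (ν : X → ℝ) : Prop :=
  (∀ x, 0 ≤ ν x) ∧ ∑ x, ν x = 1

section KLDivergence

variable {X : Type*} [Fintype X]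

theorem klDiv_self (q : X → ℝ) : klDiv q q = 0 := by
  refine Finset.sum_eq_zero fun x _ => ?_
  by_cases hx : q x = 0 <;> simp [hx]

theorem klDiv_add_sum_sub_sum {ν q : X → ℝ} (hq : ∀ x, q x ≠ 0) :
    klDiv ν q + ∑ x, q x - ∑ x, ν x = ∑ x, q x * klFun (ν x / q x) := by
  rw [klDiv, ← Finset.sum_add_distrib, ← Finset.sum_sub_distrib]
  refine Finset.sum_congr rfl fun x _ => ?_
  rw [klFun_apply]
  field_simp [hq x]

theorem klDiv_eq_sum_mul_klFun {ν q : X → ℝ} (hq : ∀ x, q x ≠ 0)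
    (hsum : ∑ x, ν x = ∑ x, q x) : klDiv ν q = ∑ x, q x * klFun (ν x / q x) := by
  rw [← klDiv_add_sum_sub_sum hq, hsum, add_sub_cancel_right]

theorem eq_of_klDiv_nonpos {ν q : X → ℝ} (hν : ∀ x, 0 ≤ ν x) (hq : ∀ x, 0 < q x)
    (hsum : ∑ x, ν x = ∑ x, q x) (hD : klDiv ν q ≤ 0) : ν = q := by
  have hterm : ∀ x ∈ Finset.univ, 0 ≤ q x * klFun (ν x / q x) := fun x _ =>
    mul_nonneg (hq x).le (klFun_nonneg (div_nonneg (hν x) (hq x).le))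
  rw [klDiv_eq_sum_mul_klFun (fun x => (hq x).ne') hsum] at hD
  have hzero := (Finset.sum_eq_zero_iff_of_nonneg hterm).mp
    (le_antisymm hD (Finset.sum_nonneg hterm))
  funext x
  have hx := hzero x (Finset.mem_univ x)
  rwa [mul_eq_zero, or_iff_right (hq x).ne', klFun_eq_zero_iff (div_nonneg (hν x) (hq x).le),
    div_eq_one_iff_eq (hq x).ne'] at hx

theorem klDiv_mul_exp_div (ν : X → ℝ) {ρ : X → ℝ} (hρ : ∀ x, ρ x ≠ 0) (g : X → ℝ) {Z : ℝ}
    (hZ : Z ≠ 0) :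
    klDiv ν (fun x => ρ x * exp (g x) / Z)
      = klDiv ν ρ - ∑ x, ν x * g x + (∑ x, ν x) * log Z := by
  rw [klDiv, klDiv, Finset.sum_mul, ← Finset.sum_sub_distrib, ← Finset.sum_add_distrib]
  refine Finset.sum_congr rfl fun x _ => ?_
  by_cases hν : ν x = 0
  · simp [hν]
  have hratio : ν x / (ρ x * exp (g x) / Z) = ν x / ρ x * Z / exp (g x) := by
    field_simp [hρ x]
  rw [hratio, log_div (mul_ne_zero (div_ne_zero hν (hρ x)) hZ) (exp_pos _).ne', log_exp,
    log_mul (div_ne_zero hν (hρ x)) hZ]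
  ring

end KLDivergence

section Gibbs

variable {X : Type*} [Fintype X]

noncomputable def gibbs (μ₀ g : X → ℝ) : X → ℝ :=
  fun x => μ₀ x * exp (g x) / ∑ y, μ₀ y * exp (g y)

variable [Nonempty X] {μ₀ : X → ℝ}

theorem sum_mul_exp_pos (hμ₀ : ∀ x, 0 < μ₀ x) (g : X → ℝ) : 0 < ∑ y, μ₀ y * exp (g y) :=
  Finset.sum_pos (fun x _ => mul_pos (hμ₀ x) (exp_pos _)) Finset.univ_nonempty

theorem gibbs_pos (hμ₀ : ∀ x, 0 < μ₀ x) (g : X → ℝ) (x : X) : 0 < gibbs μ₀ g x :=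
  div_pos (mul_pos (hμ₀ x) (exp_pos _)) (sum_mul_exp_pos hμ₀ g)

theorem sum_gibbs (hμ₀ : ∀ x, 0 < μ₀ x) (g : X → ℝ) : ∑ x, gibbs μ₀ g x = 1 := by
  simp only [gibbs]
  rw [← Finset.sum_div, div_self (sum_mul_exp_pos hμ₀ g).ne']

theorem eq_gibbs_of_mirror_step (hμ₀ : ∀ x, 0 < μ₀ x) {β γ Z₀ : ℝ} (hγ : 0 < γ)
    (hZ₀ : Z₀ ≠ 0) {G f ν₁ : X → ℝ} (hν₁ : IsProb ν₁)
    (hmin : ∀ ν, IsProb ν →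
      γ * (β * ∑ x, ν₁ x * f x + klDiv ν₁ μ₀) + klDiv ν₁ (fun x => μ₀ x * exp (-β * G x) / Z₀)
        ≤ γ * (β * ∑ x, ν x * f x + klDiv ν μ₀) + klDiv ν (fun x => μ₀ x * exp (-β * G x) / Z₀)) :
    ν₁ = gibbs μ₀ (fun x => -β * ((G x + γ * f x) / (1 + γ))) := by
  set H : X → ℝ := fun x => -β * ((G x + γ * f x) / (1 + γ))
  set Z := ∑ y, μ₀ y * exp (H y)
  have hZ : 0 < Z := sum_mul_exp_pos hμ₀ H
  have hμ₀ne : ∀ x, μ₀ x ≠ 0 := fun x => (hμ₀ x).ne'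
  have hobj : ∀ ν, IsProb ν →
      γ * (β * ∑ x, ν x * f x + klDiv ν μ₀) + klDiv ν (fun x => μ₀ x * exp (-β * G x) / Z₀)
        = (1 + γ) * klDiv ν (gibbs μ₀ H) + (log Z₀ - (1 + γ) * log Z) := by
    intro ν hν
    have hpotential : (1 + γ) * ∑ x, ν x * H x
        = ∑ x, ν x * (-β * G x) - γ * (β * ∑ x, ν x * f x) := by
      simp only [Finset.mul_sum, ← Finset.sum_sub_distrib, H]
      refine Finset.sum_congr rfl fun x _ => ?_
      field_simp
      ring
    rw [show gibbs μ₀ H = fun x => μ₀ x * exp (H x) / Z from rfl,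
      klDiv_mul_exp_div ν hμ₀ne _ hZ₀, klDiv_mul_exp_div ν hμ₀ne _ hZ.ne', hν.2]
    linear_combination hpotential
  have hq : IsProb (gibbs μ₀ H) := ⟨fun x => (gibbs_pos hμ₀ H x).le, sum_gibbs hμ₀ H⟩
  have hle := hmin _ hq
  rw [hobj _ hν₁, hobj _ hq, klDiv_self] at hle
  refine eq_of_klDiv_nonpos hν₁.1 (gibbs_pos hμ₀ H) (by rw [hν₁.2, hq.2]) ?_
  nlinarith

end Gibbs

theorem one_div_succ_mul_sum_Icc_succ (a : ℕ → ℝ) (t : ℕ) :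
    1 / ((↑(t + 1) : ℝ) + 1) * ∑ s ∈ Icc 1 (t + 1), a s
      = (1 / ((t : ℝ) + 1) * ∑ s ∈ Icc 1 t, a s + 1 / (↑(t + 1) : ℝ) * a (t + 1))
          / (1 + 1 / (↑(t + 1) : ℝ)) := by
  rw [Finset.sum_Icc_succ_top (by omega)]
  push_cast
  field_simp

theorem mirror_descent_strategy_gibbs_form_general {X : Type*} [Fintype X] [Nonempty X]
    (μ₀ : X → ℝ) (hpos : ∀ x, 0 < μ₀ x)
    (β : ℝ) (f : ℕ → X → ℝ)
    (F : ℕ → X → ℝ) (hF : ∀ t x, F t x = (1 / ((t : ℝ) + 1)) * ∑ s ∈ Finset.Icc 1 t, f s x)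
    (p : ℕ → X → ℝ)
    (hp1 : p 1 = μ₀)
    (hprob : ∀ t : ℕ, 1 ≤ t → IsProb (p (t + 1)))
    (hmin : ∀ t : ℕ, 1 ≤ t → ∀ ν : X → ℝ, IsProb ν →
      (1 / (t : ℝ)) * (β * (∑ x, p (t + 1) x * f t x) + klDiv (p (t + 1)) μ₀)
          + klDiv (p (t + 1)) (p t)
        ≤ (1 / (t : ℝ)) * (β * (∑ x, ν x * f t x) + klDiv ν μ₀) + klDiv ν (p t)) :
    ∀ t : ℕ, ∃ Z : ℝ, 0 < Z ∧ ∀ x, p (t + 1) x = μ₀ x * Real.exp (-β * F t x) / Z := by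
  intro t
  induction t with
  | zero => exact ⟨1, one_pos, fun x => by simp [hp1, hF]⟩
  | succ t ih =>
    obtain ⟨Z₀, hZ₀, hp⟩ := ih
    have hstep := eq_gibbs_of_mirror_step hpos (γ := 1 / (↑(t + 1) : ℝ)) (by positivity)
      hZ₀.ne' (hprob (t + 1) (by omega)) (by simpa only [funext hp] using hmin (t + 1) (by omega))
    have hF_succ : ∀ x, F (t + 1) x
        = (F t x + 1 / (↑(t + 1) : ℝ) * f (t + 1) x) / (1 + 1 / (↑(t + 1) : ℝ)) := by
      intro x
      rw [hF, hF, one_div_succ_mul_sum_Icc_succ (fun s => f s x)]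
    refine ⟨_, sum_mul_exp_pos hpos fun y => -β * F (t + 1) y, fun x => ?_⟩
    rw [hstep]
    simp only [gibbs, hF_succ]

/-- If `p 1 = μ₀` and for each `t ≥ 1`, `p (t+1)` minimizes
`ν ↦ γ_t [β⟨ν,f_t⟩ + D(ν‖μ₀)] + D(ν‖p t)` with `γ_t = 1/t` over probability
distributions, then `p (t+1)` has the Gibbs form `μ₀ exp(−β F_t)/Z̃` with
`F_0 = 0` and `F_t = (1/(t+1)) ∑_{s=1}^t f_s`. -/
theorem mirror_descent_strategy_gibbs_form {X : Type*} [Fintype X] [Nonempty X]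
    (μ₀ : X → ℝ) (hpos : ∀ x, 0 < μ₀ x) (hsum : ∑ x, μ₀ x = 1)
    (β : ℝ) (hβ : 0 < β) (f : ℕ → X → ℝ)
    (F : ℕ → X → ℝ) (hF : ∀ t x, F t x = (1 / ((t : ℝ) + 1)) * ∑ s ∈ Finset.Icc 1 t, f s x)
    (p : ℕ → X → ℝ)
    (hp1 : p 1 = μ₀)
    (hprob : ∀ t : ℕ, 1 ≤ t → IsProb (p (t + 1)))
    (hmin : ∀ t : ℕ, 1 ≤ t → ∀ ν : X → ℝ, IsProb ν →
      (1 / (t : ℝ)) * (β * (∑ x, p (t + 1) x * f t x) + klDiv (p (t + 1)) μ₀)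
          + klDiv (p (t + 1)) (p t)
        ≤ (1 / (t : ℝ)) * (β * (∑ x, ν x * f t x) + klDiv ν μ₀) + klDiv ν (p t)) :
    ∀ t : ℕ, ∃ Z : ℝ, 0 < Z ∧ ∀ x, p (t + 1) x = μ₀ x * Real.exp (-β * F t x) / Z :=
  mirror_descent_strategy_gibbs_form_general μ₀ hpos β f F hF p hp1 hprob hmin
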